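/- Let S = {r₁,…,r_M} be a set of M distinct unit vectors in ℝ³ that is center symmetric (r ∈ S implies −r ∈ S), and let μ be the uniform distribution on S. Then g*(μ) = (1/M)·max over unit vectors v of Σ_{j=1}^M |⟨r_j,v⟩| = (2/M)·max over subsets S' ⊆ S of ‖Σ_{r ∈ S'} r‖. Moreover, if a subset S' attains the maximum of ‖Σ_{r ∈ S'} r‖, then S' contains exactly M/2 vectors, and writing η(S') = Σ_{r ∈ S'} r, one has ⟨η(S'), r⟩ ≥ 1/2 for all r ∈ S' and ⟨η(S'), r⟩ ≤ −1/2 for all r ∈ S \ S'. -/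

import Mathlib

open MeasureTheory Real
open scoped ENNReal

noncomputable section

abbrev E3 := EuclideanSpace ℝ (Fin 3)

/-- The unit sphere S² in ℝ³. -/
def unitSphere : Set E3 := Metric.sphere (0 : E3) 1

/-- `g C μ` is the supremum over unit vectors `v` of `∫ √(C² + (1−C²)⟨r,v⟩²) dμ(r)`. -/
def g (C : ℝ) (μ : Measure E3) : ℝ :=
  ⨆ v : unitSphere, ∫ r, Real.sqrt (C ^ 2 + (1 - C ^ 2) * (inner ℝ r (v : E3) : ℝ) ^ 2) ∂μ


/-- `gstar μ` is the supremum over unit vectors `v` of `∫ |⟨r,v⟩| dμ(r)`. -/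
def gstar (μ : Measure E3) : ℝ :=
  ⨆ v : unitSphere, ∫ r, |(inner ℝ r (v : E3) : ℝ)| ∂μ

/-!
Center symmetry gives `∑ r ∈ S, r = 0`, so for each `v` the numbers `⟪r, v⟫` sum to zero and
`∑ |⟪r, v⟫| = 2 ⟪η(S'), v⟫` for `S' = {r | 0 ≤ ⟪r, v⟫}`, while `2 ⟪η(T), v⟫ ≤ ∑ |⟪r, v⟫|` for
every `T ⊆ S`. Cauchy–Schwarz, with equality at `v = η(T) / ‖η(T)‖`, turns the supremum over unit
`v` into `2 max_T ‖η(T)‖`. If `S'` maximizes `‖η(S')‖`, then neither removing `r ∈ S'` nor adding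
`r ∉ S'` increases the norm; expanding `‖η ∓ r‖²` gives `±2⟪η, r⟫ ≥ ‖r‖² = 1`. Hence `⟪η, r⟫`
has opposite signs on `r` and `-r`, so exactly one of them lies in `S'` and `2 |S'| = |S|`.
-/

open Finset Metric Pointwise RealInnerProductSpace

theorem Finset.sum_eq_zero_of_forall_neg_mem {G : Type*} [AddCommGroup G] [IsAddTorsionFree G]
    {s : Finset G} (hs : ∀ x ∈ s, -x ∈ s) : ∑ x ∈ s, x = 0 := by
  have h : ∑ x ∈ s, x = ∑ x ∈ s, -x :=
    sum_nbij' (fun x ↦ -x) (fun x ↦ -x) hs hs (fun x _ ↦ neg_neg x) (fun x _ ↦ neg_neg x)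
      (fun x _ ↦ (neg_neg x).symm)
  rw [sum_neg_distrib] at h
  exact self_eq_neg.1 h

theorem Finset.two_mul_card_eq_of_mem_iff_neg_notMem {α : Type*} [DecidableEq α] [InvolutiveNeg α]
    {s t : Finset α} (hs : ∀ x ∈ s, -x ∈ s) (ht : t ⊆ s) (h : ∀ x ∈ s, x ∈ t ↔ -x ∉ t) :
    2 * #t = #s := by
  have hneg : -t = s \ t := by
    ext x
    rw [mem_neg', mem_sdiff]
    constructor
    · intro hx
      have hxs : x ∈ s := neg_neg x ▸ hs _ (ht hx)
      exact ⟨hxs, fun hxt ↦ (h x hxs).1 hxt hx⟩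
    · rintro ⟨hxs, hxt⟩
      by_contra hx
      exact hxt ((h x hxs).2 hx)
  have hcard := congrArg card hneg
  rw [card_neg, card_sdiff_of_subset ht] at hcard
  have := card_le_card ht
  omega

section OrderedField

variable {ι 𝕜 : Type*} [Field 𝕜] [LinearOrder 𝕜] [IsStrictOrderedRing 𝕜] {s t : Finset ι}
  {f : ι → 𝕜}

theorem Finset.two_mul_sum_le_sum_abs [DecidableEq ι] (hs : ∑ i ∈ s, f i = 0) (ht : t ⊆ s) :
    2 * ∑ i ∈ t, f i ≤ ∑ i ∈ s, |f i| := by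
  have hsplit := sum_sdiff ht (f := f)
  have habs := sum_sdiff ht (f := fun i ↦ |f i|)
  have hpos : ∑ i ∈ t, f i ≤ ∑ i ∈ t, |f i| := sum_le_sum fun i _ ↦ le_abs_self _
  have hneg : ∑ i ∈ s \ t, -f i ≤ ∑ i ∈ s \ t, |f i| := sum_le_sum fun i _ ↦ neg_le_abs _
  rw [sum_neg_distrib] at hneg
  linarith

theorem Finset.sum_abs_eq_two_mul_sum_filter_nonneg [DecidablePred fun i ↦ 0 ≤ f i]
    (hs : ∑ i ∈ s, f i = 0) : ∑ i ∈ s, |f i| = 2 * ∑ i ∈ s with 0 ≤ f i, f i := by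
  have hsplit := sum_filter_add_sum_filter_not s (fun i ↦ 0 ≤ f i) f
  have habs := sum_filter_add_sum_filter_not s (fun i ↦ 0 ≤ f i) (fun i ↦ |f i|)
  rw [sum_congr rfl fun i hi ↦ abs_of_nonneg (mem_filter.1 hi).2,
    sum_congr rfl fun i hi ↦ abs_of_neg (not_le.1 (mem_filter.1 hi).2), sum_neg_distrib] at habs
  linarith

end OrderedField

section InnerProductSpace

variable {E : Type*} [NormedAddCommGroup E] [InnerProductSpace ℝ E] {S T : Finset E}

theorem two_mul_inner_sum_le_sum_abs_inner (hS : ∑ r ∈ S, r = 0) (hT : T ⊆ S) (v : E) :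
    2 * ⟪∑ r ∈ T, r, v⟫ ≤ ∑ r ∈ S, |⟪r, v⟫| := by
  classical
  rw [sum_inner]
  exact two_mul_sum_le_sum_abs (by rw [← sum_inner, hS, inner_zero_left]) hT

theorem sum_abs_inner_eq_two_mul_inner_sum_filter (hS : ∑ r ∈ S, r = 0) (v : E) :
    ∑ r ∈ S, |⟪r, v⟫| = 2 * ⟪∑ r ∈ S with 0 ≤ ⟪r, v⟫, r, v⟫ := by
  rw [sum_inner]
  exact sum_abs_eq_two_mul_sum_filter_nonneg (by rw [← sum_inner, hS, inner_zero_left])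

theorem Finset.le_ciSup_mem {ι α : Type*} [ConditionallyCompleteLattice α] (s : Finset ι)
    (f : ι → α) {i : ι} (hi : i ∈ s) : f i ≤ ⨆ j ∈ s, f j :=
  le_ciSup₂ (f := fun j (_ : j ∈ s) ↦ f j)
    ((s.finite_toSet.image f).bddAbove.mono <|
      Set.iUnion_subset fun _ ↦ Set.range_subset_iff.2 fun hj ↦ Set.mem_image_of_mem f hj) i hi

theorem iSup_sphere_sum_abs_inner (hS : ∑ r ∈ S, r = 0) :
    ⨆ v : sphere (0 : E) 1, ∑ r ∈ S, |⟪r, (v : E)⟫| = 2 * ⨆ T ∈ S.powerset, ‖∑ r ∈ T, r‖ := by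
  set B := ⨆ T ∈ S.powerset, ‖∑ r ∈ T, r‖
  have hB : ∀ T ⊆ S, ‖∑ r ∈ T, r‖ ≤ B := fun T hT ↦
    S.powerset.le_ciSup_mem (fun T ↦ ‖∑ r ∈ T, r‖) (mem_powerset.2 hT)
  have hB₀ : 0 ≤ B := by simpa using hB ∅ (empty_subset S)
  have hupper : ∀ v : sphere (0 : E) 1, ∑ r ∈ S, |⟪r, (v : E)⟫| ≤ 2 * B := by
    intro v
    rw [sum_abs_inner_eq_two_mul_inner_sum_filter hS]
    have hv : ‖(v : E)‖ = 1 := norm_eq_of_mem_sphere v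
    calc 2 * ⟪∑ r ∈ S with 0 ≤ ⟪r, (v : E)⟫, r, (v : E)⟫
        ≤ 2 * ‖∑ r ∈ S with 0 ≤ ⟪r, (v : E)⟫, r‖ := by
          gcongr
          simpa [hv] using real_inner_le_norm (∑ r ∈ S with 0 ≤ ⟪r, (v : E)⟫, r) (v : E)
      _ ≤ 2 * B := by gcongr; exact hB _ (filter_subset _ _)
  refine le_antisymm (Real.iSup_le hupper (by positivity)) ?_
  have hA₀ : 0 ≤ ⨆ v : sphere (0 : E) 1, ∑ r ∈ S, |⟪r, (v : E)⟫| :=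
    Real.iSup_nonneg fun v ↦ sum_nonneg fun r _ ↦ abs_nonneg _
  rw [Real.mul_iSup_of_nonneg zero_le_two]
  refine Real.iSup_le (fun T ↦ ?_) hA₀
  rw [Real.mul_iSup_of_nonneg zero_le_two]
  refine Real.iSup_le (fun hT ↦ ?_) hA₀
  set η := ∑ r ∈ T, r
  rcases eq_or_ne η 0 with hη | hη
  · simpa [hη] using hA₀
  let v : sphere (0 : E) 1 := ⟨‖η‖⁻¹ • η, by simp [norm_smul, hη]⟩
  have hηv : ⟪η, (v : E)⟫ = ‖η‖ := by
    simp only [v, real_inner_smul_right, real_inner_self_eq_norm_mul_norm]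
    field_simp [norm_ne_zero_iff.2 hη]
  calc 2 * ‖η‖ = 2 * ⟪η, (v : E)⟫ := by rw [hηv]
    _ ≤ ∑ r ∈ S, |⟪r, (v : E)⟫| :=
      two_mul_inner_sum_le_sum_abs_inner hS (mem_powerset.1 hT) v
    _ ≤ _ := le_ciSup ⟨2 * B, Set.forall_mem_range.2 hupper⟩ v

theorem norm_sq_le_two_mul_inner_of_norm_sub_le {x r : E} (h : ‖x - r‖ ≤ ‖x‖) :
    ‖r‖ ^ 2 ≤ 2 * ⟪x, r⟫ := by
  have := pow_le_pow_left₀ (norm_nonneg _) h 2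
  rw [norm_sub_sq_real] at this
  linarith

theorem norm_sq_le_two_mul_inner_sum_of_forall_norm_sum_le {S S' : Finset E} {r : E}
    (hS' : S' ⊆ S) (hmax : ∀ T ∈ S.powerset, ‖∑ x ∈ T, x‖ ≤ ‖∑ x ∈ S', x‖) (hr : r ∈ S') :
    ‖r‖ ^ 2 ≤ 2 * ⟪∑ x ∈ S', x, r⟫ := by
  classical
  refine norm_sq_le_two_mul_inner_of_norm_sub_le ?_
  simpa [sum_erase_eq_sub hr] using hmax _ (mem_powerset.2 ((erase_subset r S').trans hS'))

theorem two_mul_inner_sum_le_neg_norm_sq_of_forall_norm_sum_le {S S' : Finset E} {r : E}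
    (hS' : S' ⊆ S) (hmax : ∀ T ∈ S.powerset, ‖∑ x ∈ T, x‖ ≤ ‖∑ x ∈ S', x‖) (hr : r ∈ S)
    (hr' : r ∉ S') : 2 * ⟪∑ x ∈ S', x, r⟫ ≤ -‖r‖ ^ 2 := by
  classical
  have := norm_sq_le_two_mul_inner_of_norm_sub_le (x := ∑ x ∈ S', x) (r := -r)
    (by simpa [sum_insert hr', add_comm] using hmax _ (mem_powerset.2 (insert_subset hr hS')))
  rw [norm_neg, inner_neg_right] at this
  linarith

theorem two_mul_card_eq_of_forall_norm_sum_le {S S' : Finset E} (hsym : ∀ r ∈ S, -r ∈ S)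
    (h0 : ∀ r ∈ S, r ≠ 0) (hS' : S' ⊆ S)
    (hmax : ∀ T ∈ S.powerset, ‖∑ x ∈ T, x‖ ≤ ‖∑ x ∈ S', x‖) : 2 * #S' = #S := by
  classical
  have hpos : ∀ r ∈ S', 0 < ⟪∑ x ∈ S', x, r⟫ := fun r hr ↦ by
    linarith [norm_sq_le_two_mul_inner_sum_of_forall_norm_sum_le hS' hmax hr,
      pow_pos (norm_pos_iff.2 (h0 r (hS' hr))) 2]
  have hneg : ∀ r ∈ S, r ∉ S' → ⟪∑ x ∈ S', x, r⟫ < 0 := fun r hr hr' ↦ by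
    linarith [two_mul_inner_sum_le_neg_norm_sq_of_forall_norm_sum_le hS' hmax hr hr',
      pow_pos (norm_pos_iff.2 (h0 r hr)) 2]
  refine two_mul_card_eq_of_mem_iff_neg_notMem hsym hS' fun r hr ↦ ⟨fun h h' ↦ ?_, fun h ↦ ?_⟩
  · linarith [hpos r h, hpos (-r) h', inner_neg_right (𝕜 := ℝ) (∑ x ∈ S', x) r]
  · by_contra hr'
    linarith [hneg r hr hr', hneg (-r) (hsym r hr) h, inner_neg_right (𝕜 := ℝ) (∑ x ∈ S', x) r]

end InnerProductSpace

theorem MeasureTheory.integral_smul_sum_dirac {α : Type*} [MeasurableSpace α]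
    [MeasurableSingletonClass α] (c : ℝ≥0∞) (s : Finset α) (f : α → ℝ) :
    ∫ x, f x ∂(c • ∑ a ∈ s, Measure.dirac a) = c.toReal * ∑ a ∈ s, f a := by
  rw [integral_smul_measure,
    integral_finsetSum_measure fun a _ ↦ integrable_dirac enorm_lt_top]
  simp only [integral_dirac, smul_eq_mul]

theorem gstar_uniform (S : Finset E3) :
    gstar ((S.card : ℝ≥0∞)⁻¹ • ∑ r ∈ S, Measure.dirac r)
      = (1 / S.card) * ⨆ v : unitSphere, ∑ r ∈ S, |(inner ℝ r (v : E3) : ℝ)| := by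
  simp only [gstar, integral_smul_sum_dirac, ENNReal.toReal_inv, ENNReal.toReal_natCast]
  rw [Real.mul_iSup_of_nonneg (by positivity), one_div]

theorem gstar_center_symmetric (S : Finset E3)
    (hunit : ∀ r ∈ S, ‖r‖ = 1) (hsym : ∀ r ∈ S, -r ∈ S) :
    gstar ((S.card : ℝ≥0∞)⁻¹ • ∑ r ∈ S, Measure.dirac r)
        = (1 / S.card) * ⨆ v : unitSphere, ∑ r ∈ S, |(inner ℝ r (v : E3) : ℝ)| ∧
    gstar ((S.card : ℝ≥0∞)⁻¹ • ∑ r ∈ S, Measure.dirac r)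
        = (2 / S.card) * ⨆ S' ∈ S.powerset, ‖∑ r ∈ S', r‖ ∧
    ∀ S' ∈ S.powerset, (∀ S'' ∈ S.powerset, ‖∑ r ∈ S'', r‖ ≤ ‖∑ r ∈ S', r‖) →
      2 * S'.card = S.card ∧
      (∀ r ∈ S', (1 : ℝ) / 2 ≤ (inner ℝ (∑ x ∈ S', x) r : ℝ)) ∧
      (∀ r ∈ S, r ∉ S' → (inner ℝ (∑ x ∈ S', x) r : ℝ) ≤ -(1 / 2)) := by
  have : IsAddTorsionFree E3 := .of_module_rat _
  have hsum : ∑ r ∈ S, r = 0 := sum_eq_zero_of_forall_neg_mem hsym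
  refine ⟨gstar_uniform S, ?_, fun S' hS' hmax ↦ ?_⟩
  · rw [gstar_uniform, unitSphere, iSup_sphere_sum_abs_inner hsum]
    ring
  rw [mem_powerset] at hS'
  have h0 : ∀ r ∈ S, r ≠ 0 := fun r hr ↦ norm_ne_zero_iff.1 (by simp [hunit r hr])
  refine ⟨two_mul_card_eq_of_forall_norm_sum_le hsym h0 hS' hmax, fun r hr ↦ ?_, fun r hr hr' ↦ ?_⟩
  · have := norm_sq_le_two_mul_inner_sum_of_forall_norm_sum_le hS' hmax hr
    rw [hunit r (hS' hr)] at this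
    linarith
  · have := two_mul_inner_sum_le_neg_norm_sq_of_forall_norm_sum_le hS' hmax hr hr'
    rw [hunit r hr] at this
    linarith
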